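/- arXiv:1207.0036 — 3 statements merged into one kernel-verified Lean document; each statement's English description precedes it below -/
import Mathlib

section
/- If x̂ is an interior incentive stable state (ISS), i.e. Σ_α φ_α(x) < Σ_α (x̂_α/x_α) φ_α(x) for all x ≠ x̂ in a punctured neighborhood of x̂ within the interior of the simplex, then V(x) = D_KL(x̂||x) has strictly negative derivative along trajectories of the incentive dynamic ẋ_α = φ_α(x) - x_α Σ_β φ_β(x) in that punctured neighborhood; i.e. V is a strict local Lyapunov function at x̂. -/
/-!
Along the incentive dynamic `ẋ_a = φ_a(x) - x_a Σ_b φ_b(x)`, the relative entropy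
`V = Σ_a x̂_a log (x̂_a / x_a)` has derivative `-Σ_a (x̂_a / x_a) ẋ_a`, which equals
`Σ_a φ_a(x) - Σ_a (x̂_a / x_a) φ_a(x)` because `Σ_a x̂_a = 1`. The ISS inequality says precisely
that this is negative.
-/

open Real Finset

theorem hasDerivAt_const_mul_log_const_div {f : ℝ → ℝ} {f' t : ℝ} (c : ℝ)
    (hf : HasDerivAt f f' t) (ht : f t ≠ 0) :
    HasDerivAt (fun s => c * log (c / f s)) (-(c / f t) * f') t := by
  rcases eq_or_ne c 0 with rfl | hc
  · simpa using hasDerivAt_const t (0 : ℝ)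
  refine ((((hasDerivAt_const t c).fun_div hf ht).log (div_ne_zero hc ht)).const_mul c)
    |>.congr_deriv ?_
  field_simp
  ring

section

variable {α : Type*} [Fintype α]

theorem hasDerivAt_sum_mul_log_div (p : α → ℝ) {x : ℝ → α → ℝ} {v : α → ℝ} {t : ℝ}
    (hx : ∀ a, HasDerivAt (fun s => x s a) (v a) t) (ht : ∀ a, x t a ≠ 0) :
    HasDerivAt (fun s => ∑ a, p a * log (p a / x s a)) (-∑ a, (p a / x t a) * v a) t := by
  rw [← Finset.sum_neg_distrib]
  exact HasDerivAt.fun_sum fun a _ => by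
    simpa only [neg_mul] using hasDerivAt_const_mul_log_const_div (p a) (hx a) (ht a)

theorem sum_div_mul_sub_mul_sum (p y g : α → ℝ) (hy : ∀ a, y a ≠ 0) :
    ∑ a, (p a / y a) * (g a - y a * ∑ b, g b) =
      ∑ a, (p a / y a) * g a - (∑ a, p a) * ∑ b, g b := by
  rw [Finset.sum_mul, ← Finset.sum_sub_distrib]
  refine Finset.sum_congr rfl fun a _ => ?_
  field_simp [hy a]

end

theorem iss_implies_lyapunov_general {α : Type*} [Fintype α]
    (xh : α → ℝ) (hxh1 : ∑ a, xh a = 1)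
    (φ : (α → ℝ) → (α → ℝ))
    (N : Set (α → ℝ))
    (hISS : ∀ y ∈ N, (∀ a, 0 < y a) → ∑ a, y a = 1 → y ≠ xh →
      (∑ a, φ y a) < ∑ a, (xh a / y a) * φ y a)
    (x : ℝ → α → ℝ)
    (hpos : ∀ t a, 0 < x t a) (hsum : ∀ t, ∑ a, x t a = 1)
    (hode : ∀ t a, HasDerivAt (fun s => x s a)
      (φ (x t) a - x t a * ∑ b, φ (x t) b) t)
    (t : ℝ) (hmem : x t ∈ N) (hne : x t ≠ xh) :
    deriv (fun s => ∑ a, xh a * Real.log (xh a / x s a)) t < 0 := by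
  have hx0 : ∀ a, x t a ≠ 0 := fun a => (hpos t a).ne'
  rw [(hasDerivAt_sum_mul_log_div xh (hode t) hx0).deriv,
    sum_div_mul_sub_mul_sum xh (x t) (φ (x t)) hx0, hxh1, one_mul]
  linarith [hISS (x t) hmem (hpos t) (hsum t) hne]

theorem iss_implies_lyapunov {α : Type*} [Fintype α]
    (xh : α → ℝ) (hxh0 : ∀ a, 0 < xh a) (hxh1 : ∑ a, xh a = 1)
    (φ : (α → ℝ) → (α → ℝ))
    (N : Set (α → ℝ)) (hN : N ∈ nhds xh)
    (hISS : ∀ y ∈ N, (∀ a, 0 < y a) → ∑ a, y a = 1 → y ≠ xh →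
      (∑ a, φ y a) < ∑ a, (xh a / y a) * φ y a)
    (x : ℝ → α → ℝ)
    (hpos : ∀ t a, 0 < x t a) (hsum : ∀ t, ∑ a, x t a = 1)
    (hode : ∀ t a, HasDerivAt (fun s => x s a)
      (φ (x t) a - x t a * ∑ b, φ (x t) b) t)
    (t : ℝ) (hmem : x t ∈ N) (hne : x t ≠ xh) :
    deriv (fun s => ∑ a, xh a * Real.log (xh a / x s a)) t < 0 :=
  iss_implies_lyapunov_general xh hxh1 φ N hISS x hpos hsum hode t hmem hne
end

section
/- If x̂ is an interior ISS for a continuous incentive φ, then x̂ is a rest point of the incentive dynamic: φ_α(x̂) = x̂_α Σ_β φ_β(x̂) for all α. -/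
/-!
Write `g_c(x) = φ_c(x) / x_c`. Moving from `x̂` along `x̂ + t (e_a - e_b)` with `t > 0` changes
`∑ x_c g_c(x)` by `t (g_a(x) - g_b(x))` relative to `∑ x̂_c g_c(x)`, so the ISS inequality forces
`g_a < g_b` on that segment; letting `t → 0⁺` and using continuity gives `g_a(x̂) ≤ g_b(x̂)`.
By symmetry all the ratios `g_c(x̂)` agree, so `φ(x̂)` is proportional to `x̂`, and summing over
the coordinates identifies the constant as `∑_β φ_β(x̂)`.
-/

open Finset Filter Topology

section Perturbation

variable {α : Type*} [Fintype α] [DecidableEq α]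

theorem sum_add_smul_single_sub_single_mul (x G : α → ℝ) (t : ℝ) (a b : α) :
    ∑ c, (x + t • (Pi.single a 1 - Pi.single b 1) : α → ℝ) c * G c
      = ∑ c, x c * G c + t * (G a - G b) := by
  simp [add_mul, mul_sub, sub_mul, sum_add_distrib, sum_sub_distrib, Pi.single_apply]

theorem sum_add_smul_single_sub_single (x : α → ℝ) (t : ℝ) (a b : α) :
    ∑ c, (x + t • (Pi.single a 1 - Pi.single b 1) : α → ℝ) c = ∑ c, x c := by
  simpa using sum_add_smul_single_sub_single_mul x (fun _ => 1) t a b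

theorem lt_of_sum_add_smul_single_sub_single_mul_lt {x G : α → ℝ} {t : ℝ} {a b : α}
    (ht : 0 < t)
    (h : ∑ c, (x + t • (Pi.single a 1 - Pi.single b 1) : α → ℝ) c * G c < ∑ c, x c * G c) :
    G a < G b := by
  rw [sum_add_smul_single_sub_single_mul] at h
  exact sub_neg.1 (neg_of_mul_neg_right (by linarith) ht.le)

omit [Fintype α] in
theorem add_smul_single_sub_single_ne_self (x : α → ℝ) {t : ℝ} (ht : t ≠ 0) {a b : α}
    (hab : a ≠ b) : x + t • (Pi.single a 1 - Pi.single b 1) ≠ x := by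
  intro h
  have := congrFun h a
  simp [hab, ht] at this

end Perturbation

theorem eq_mul_sum_of_div_eq {α : Type*} [Fintype α] {x y : α → ℝ} (hx : ∀ a, x a ≠ 0)
    (hx1 : ∑ a, x a = 1) (h : ∀ a b, y a / x a = y b / x b) (a : α) :
    y a = x a * ∑ b, y b := by
  have hy : ∀ b, y b = x b * (y a / x a) := fun b => by
    rw [h a b, mul_div_cancel₀ _ (hx b)]
  have hsum : ∑ b, y b = y a / x a := by
    rw [sum_congr rfl fun b _ => hy b, ← sum_mul, hx1, one_mul]
  rw [hsum, mul_div_cancel₀ _ (hx a)]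

theorem ratio_le_of_iss {α : Type*} [Fintype α] (φ : (α → ℝ) → (α → ℝ)) (xh : α → ℝ)
    (hφ : ContinuousWithinAt φ {x | (∀ a, 0 < x a) ∧ ∑ a, x a = 1} xh)
    (hxh0 : ∀ a, 0 < xh a) (hxh1 : ∑ a, xh a = 1)
    (N : Set (α → ℝ)) (hN : N ∈ 𝓝 xh)
    (hISS : ∀ x ∈ N, (∀ a, 0 < x a) → ∑ a, x a = 1 → x ≠ xh →
      (∑ a, x a * (φ x a / x a)) < ∑ a, xh a * (φ x a / x a))
    (a b : α) : φ xh a / xh a ≤ φ xh b / xh b := by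
  classical
  rcases eq_or_ne a b with rfl | hab
  · exact le_rfl
  set p : ℝ → α → ℝ := fun t => xh + t • (Pi.single a 1 - Pi.single b 1)
  have hp : Tendsto p (𝓝[>] 0) (𝓝 xh) := by
    have : Continuous p := by fun_prop
    simpa [p] using this.continuousWithinAt.tendsto (x := 0) (s := Set.Ioi 0)
  have hpos : ∀ᶠ t in 𝓝[>] 0, ∀ c, 0 < p t c :=
    eventually_all.2 fun c => (tendsto_pi_nhds.1 hp c).eventually_const_lt (hxh0 c)
  have hpS : Tendsto p (𝓝[>] 0) (𝓝[{x | (∀ a, 0 < x a) ∧ ∑ a, x a = 1}] xh) :=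
    tendsto_nhdsWithin_iff.2 ⟨hp, hpos.mono fun t ht =>
      ⟨ht, by rw [sum_add_smul_single_sub_single, hxh1]⟩⟩
  have hratio : ∀ c, Tendsto (fun t => φ (p t) c / p t c) (𝓝[>] 0) (𝓝 (φ xh c / xh c)) :=
    fun c => (tendsto_pi_nhds.1 (hφ.tendsto.comp hpS) c).div (tendsto_pi_nhds.1 hp c)
      (hxh0 c).ne'
  have hlt : ∀ᶠ t in 𝓝[>] 0, φ (p t) a / p t a < φ (p t) b / p t b := by
    filter_upwards [self_mem_nhdsWithin, hpos, hp.eventually hN] with t ht htpos htN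
    exact lt_of_sum_add_smul_single_sub_single_mul_lt ht <| hISS _ htN htpos
      (by rw [sum_add_smul_single_sub_single, hxh1])
      (add_smul_single_sub_single_ne_self xh (ne_of_gt ht) hab)
  exact le_of_tendsto_of_tendsto (hratio a) (hratio b) (hlt.mono fun _ => le_of_lt)

theorem interior_iss_is_rest_point {α : Type*} [Fintype α]
    (φ : (α → ℝ) → (α → ℝ))
    (hφ : ContinuousOn φ {x | (∀ a, 0 < x a) ∧ ∑ a, x a = 1})
    (xh : α → ℝ) (hxh0 : ∀ a, 0 < xh a) (hxh1 : ∑ a, xh a = 1)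
    (N : Set (α → ℝ)) (hN : N ∈ nhds xh)
    (hISS : ∀ x ∈ N, (∀ a, 0 < x a) → ∑ a, x a = 1 → x ≠ xh →
      (∑ a, x a * (φ x a / x a)) < ∑ a, xh a * (φ x a / x a)) :
    ∀ a, φ xh a = xh a * ∑ b, φ xh b := by
  have hle := ratio_le_of_iss φ xh (hφ xh ⟨hxh0, hxh1⟩) hxh0 hxh1 N hN hISS
  exact eq_mul_sum_of_div_eq (fun a => (hxh0 a).ne') hxh1 fun a b =>
    le_antisymm (hle a b) (hle b a)
end

section
/- If x̂ is an interior rest point of the incentive dynamic with C¹ incentive φ, and the ISS inequality Σ_α ((x_α - x̂_α)/x_α) φ_α(x) < 0 holds for all x ≠ x̂ in a neighborhood of x̂ in the interior of the simplex, then x̂ is Lyapunov stable for the incentive dynamic restricted to the interior of the simplex. -/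
/-!
Near `xh` the relative entropy `H x = ∑ xh a * log (xh a / x a)` is a Lyapunov function: by
Gibbs' inequality it is positive away from `xh`, and along a trajectory in the interior of the
simplex its derivative is exactly the ISS sum `∑ (x a - xh a) / x a * φ x a`, hence nonpositive
while the trajectory stays near `xh`. A trajectory starting where `H` is below its minimum over a
small sphere around `xh` can therefore never reach that sphere.
-/

open Real Set Filter Topology Metric InformationTheory

section RelEntropy

variable {α : Type*} [Fintype α]

/-- Written as `∑ q klFun (p / q)`, which is nonnegative without normalising `p` and `q`; it
agrees with `∑ p log (p / q)` when `∑ p = ∑ q`. -/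
noncomputable def relEntropy (p q : α → ℝ) : ℝ := ∑ a, q a * klFun (p a / q a)

lemma relEntropy_self (p : α → ℝ) : relEntropy p p = 0 := by
  refine Finset.sum_eq_zero fun a _ => ?_
  rcases eq_or_ne (p a) 0 with h | h
  · simp [h]
  · simp [div_self h, klFun_one]

lemma relEntropy_pos {p q : α → ℝ} (hp : ∀ a, 0 ≤ p a) (hq : ∀ a, 0 < q a) (hpq : p ≠ q) :
    0 < relEntropy p q := by
  obtain ⟨a, ha⟩ := Function.ne_iff.mp hpq
  refine Finset.sum_pos' (fun b _ => mul_nonneg (hq b).le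
    (klFun_nonneg (div_nonneg (hp b) (hq b).le))) ⟨a, Finset.mem_univ a, ?_⟩
  have hratio : 0 ≤ p a / q a := div_nonneg (hp a) (hq a).le
  have hratio_ne : p a / q a ≠ 1 := fun h => ha ((div_eq_one_iff_eq (hq a).ne').mp h)
  exact mul_pos (hq a)
    ((klFun_nonneg hratio).lt_of_ne' ((klFun_eq_zero_iff hratio).not.mpr hratio_ne))

lemma continuousAt_relEntropy (p : α → ℝ) {q : α → ℝ} (hq : ∀ a, q a ≠ 0) :
    ContinuousAt (relEntropy p) q := by
  refine tendsto_finsetSum _ fun a _ => ?_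
  have hqa : ContinuousAt (fun q : α → ℝ => q a) q := (continuous_apply a).continuousAt
  exact hqa.mul (continuous_klFun.continuousAt.comp (continuousAt_const.div hqa (hq a)))

lemma hasDerivAt_relEntropy_comp {p : α → ℝ} (hp : ∀ a, p a ≠ 0) {y : ℝ → α → ℝ} {y' : α → ℝ}
    {t : ℝ} (hy : ∀ a, HasDerivAt (fun s => y s a) (y' a) t) (hyt : ∀ a, y t a ≠ 0) :
    HasDerivAt (fun s => relEntropy p (y s)) (∑ a, y' a * (1 - p a / y t a)) t := by
  refine HasDerivAt.fun_sum fun a _ => ?_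
  have hquot : HasDerivAt (fun s => p a / y s a) ((0 * y t a - p a * y' a) / y t a ^ 2) t :=
    (hasDerivAt_const t (p a)).fun_div (hy a) (hyt a)
  have hratio := (hasDerivAt_klFun (div_ne_zero (hp a) (hyt a))).comp t hquot
  refine ((hy a).fun_mul hratio).congr_deriv ?_
  rw [Function.comp_apply, klFun_apply]
  field_simp
  ring

lemma exists_pos_le_relEntropy_on_sphere {p : α → ℝ} (hp : ∀ a, 0 ≤ p a) {ε : ℝ} (hε : ε ≠ 0)
    (hpos : ∀ y ∈ sphere p ε, ∀ a, 0 < y a) : ∃ m, 0 < m ∧ ∀ y ∈ sphere p ε, m ≤ relEntropy p y :=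
  (isCompact_sphere p ε).exists_forall_le'
    (fun y hy => (continuousAt_relEntropy p fun a => (hpos y hy a).ne').continuousWithinAt)
    (fun y hy => relEntropy_pos hp (hpos y hy) (ne_of_mem_sphere hy hε).symm)

lemma sum_incentive_mul_one_sub_div {f x xh : α → ℝ} (hx : ∀ a, x a ≠ 0)
    (hsum : ∑ a, x a = ∑ a, xh a) :
    ∑ a, (f a - x a * ∑ b, f b) * (1 - xh a / x a) = ∑ a, (x a - xh a) / x a * f a := by
  have hterm : ∀ a, (f a - x a * ∑ b, f b) * (1 - xh a / x a) =
      (x a - xh a) / x a * f a - (∑ b, f b) * (x a - xh a) := fun a => by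
    field_simp [hx a]
  rw [Finset.sum_congr rfl fun a _ => hterm a, Finset.sum_sub_distrib, ← Finset.mul_sum,
    Finset.sum_sub_distrib, hsum, sub_self, mul_zero, sub_zero]

lemma relEntropy_le_of_iss {φ : (α → ℝ) → α → ℝ} {xh : α → ℝ} (hxh : ∀ a, 0 < xh a)
    (hxh1 : ∑ a, xh a = 1) {x : ℝ → α → ℝ}
    (hxS : ∀ t, 0 ≤ t → (∀ a, 0 < x t a) ∧ ∑ a, x t a = 1)
    (hxd : ∀ t, 0 ≤ t → ∀ a, HasDerivAt (fun s => x s a) (φ (x t) a - x t a * ∑ b, φ (x t) b) t)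
    {T : ℝ} (hT : 0 ≤ T) (hISS : ∀ s ∈ Icc 0 T, ∑ a, (x s a - xh a) / x s a * φ (x s) a ≤ 0) :
    relEntropy xh (x T) ≤ relEntropy xh (x 0) := by
  have hderiv : ∀ s ∈ Icc 0 T, HasDerivAt (fun s => relEntropy xh (x s))
      (∑ a, (x s a - xh a) / x s a * φ (x s) a) s := fun s hs => by
    have hpos := (hxS s hs.1).1
    rw [← sum_incentive_mul_one_sub_div (fun a => (hpos a).ne') (by rw [(hxS s hs.1).2, hxh1])]
    exact hasDerivAt_relEntropy_comp (fun a => (hxh a).ne') (hxd s hs.1) fun a => (hpos a).ne'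
  refine antitoneOn_of_hasDerivWithinAt_nonpos (convex_Icc 0 T)
    (fun s hs => (hderiv s hs).continuousAt.continuousWithinAt)
    (fun s hs => (hderiv s (interior_subset hs)).hasDerivWithinAt)
    (fun s hs => hISS s (interior_subset hs)) ⟨le_rfl, hT⟩ ⟨hT, le_rfl⟩ hT

end RelEntropy

lemma dist_lt_of_lyapunov {E : Type*} [PseudoMetricSpace E] {V : E → ℝ} {γ : ℝ → E} {c : E}
    {ε m : ℝ} (hγ : ContinuousOn γ (Ici 0)) (h0 : dist (γ 0) c < ε) (hV0 : V (γ 0) < m)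
    (hsphere : ∀ t, 0 ≤ t → dist (γ t) c = ε → m ≤ V (γ t))
    (hdecr : ∀ T, 0 ≤ T → (∀ s ∈ Icc 0 T, dist (γ s) c ≤ ε) → V (γ T) ≤ V (γ 0)) :
    ∀ t, 0 ≤ t → dist (γ t) c < ε := by
  intro t ht
  by_contra! hexit
  set f := fun s => dist (γ s) c
  have hf : ContinuousOn f (Icc 0 t) :=
    (continuous_id.dist continuous_const).comp_continuousOn (hγ.mono Icc_subset_Ici_self)
  set Z := Icc 0 t ∩ f ⁻¹' Ici ε
  have hZbdd : BddBelow Z := ⟨0, fun s hs => hs.1.1⟩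
  -- `t₁` is the first time the curve reaches the sphere.
  set t₁ := sInf Z
  have ht₁ : t₁ ∈ Z :=
    (hf.preimage_isClosed_of_isClosed isClosed_Icc isClosed_Ici).csInf_mem
      ⟨t, ⟨ht, le_rfl⟩, hexit⟩ hZbdd
  have hbefore : ∀ s ∈ Ico 0 t₁, f s < ε := fun s hs => lt_of_not_ge fun h =>
    (csInf_le hZbdd ⟨⟨hs.1, hs.2.le.trans ht₁.1.2⟩, h⟩).not_gt hs.2
  obtain ⟨s, hs, hfs⟩ : ∃ s ∈ Icc 0 t₁, f s = ε :=
    intermediate_value_Icc ht₁.1.1 (hf.mono (Icc_subset_Icc_right ht₁.1.2)) ⟨h0.le, ht₁.2⟩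
  have hst : s = t₁ := le_antisymm hs.2 (csInf_le hZbdd ⟨⟨hs.1, hs.2.trans ht₁.1.2⟩, hfs.ge⟩)
  rw [hst] at hfs
  have hinside : ∀ r ∈ Icc 0 t₁, f r ≤ ε := fun r hr =>
    hr.2.lt_or_eq.elim (fun h => (hbefore r ⟨hr.1, h⟩).le) fun h => h ▸ hfs.le
  linarith [hdecr t₁ ht₁.1.1 hinside, hsphere t₁ ht₁.1.1 hfs]

theorem iss_implies_lyapunov_stable_general {α : Type*} [Fintype α]
    (φ : (α → ℝ) → (α → ℝ))
    (xh : α → ℝ) (hxh : xh ∈ {x : α → ℝ | (∀ a, 0 < x a) ∧ ∑ a, x a = 1})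
    (N : Set (α → ℝ)) (hN : N ∈ nhds xh)
    (hISS : ∀ x ∈ N, (∀ a, 0 < x a) → ∑ a, x a = 1 → x ≠ xh →
      (∑ a, ((x a - xh a) / x a) * φ x a) < 0) :
    ∀ U ∈ nhdsWithin xh {x : α → ℝ | (∀ a, 0 < x a) ∧ ∑ a, x a = 1},
      ∃ W ∈ nhdsWithin xh {x : α → ℝ | (∀ a, 0 < x a) ∧ ∑ a, x a = 1},
        W ⊆ U ∧
        ∀ x : ℝ → α → ℝ,
          (∀ t : ℝ, 0 ≤ t → x t ∈ {x : α → ℝ | (∀ a, 0 < x a) ∧ ∑ a, x a = 1}) →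
          (∀ t : ℝ, 0 ≤ t → ∀ a, HasDerivAt (fun s => x s a)
            (φ (x t) a - x t a * ∑ b, φ (x t) b) t) →
          x 0 ∈ W → ∀ t : ℝ, 0 ≤ t → x t ∈ U := by
  obtain ⟨hxh, hxh1⟩ := hxh
  intro U hU
  obtain ⟨U', hU', hU'U⟩ := mem_nhdsWithin_iff_exists_mem_nhds_inter.mp hU
  have hpos : ∀ᶠ y in 𝓝 xh, ∀ a, 0 < y a := eventually_all.2 fun a =>
    (continuous_apply a).continuousAt.preimage_mem_nhds (Ioi_mem_nhds (hxh a))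
  obtain ⟨ε, hε, hball⟩ := nhds_basis_closedBall.mem_iff.mp (inter_mem (inter_mem hU' hN) hpos)
  obtain ⟨m, hm, hmsphere⟩ := exists_pos_le_relEntropy_on_sphere (fun a => (hxh a).le) hε.ne'
    fun y hy => (hball (sphere_subset_closedBall hy)).2
  have hsublevel : {y | relEntropy xh y < m} ∈ 𝓝 xh :=
    (continuousAt_relEntropy xh fun a => (hxh a).ne').preimage_mem_nhds
      (Iio_mem_nhds (by rwa [relEntropy_self]))
  refine ⟨ball xh ε ∩ {y | relEntropy xh y < m} ∩ _,
    inter_mem (mem_nhdsWithin_of_mem_nhds (inter_mem (ball_mem_nhds xh hε) hsublevel))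
      self_mem_nhdsWithin,
    fun y hy => hU'U ⟨(hball (ball_subset_closedBall hy.1.1)).1.1, hy.2⟩, ?_⟩
  intro x hxS hxd hx0 t ht
  have hstay : dist (x t) xh < ε := by
    refine dist_lt_of_lyapunov (V := relEntropy xh)
      (fun s hs => (continuousAt_pi.2 fun a => (hxd s hs a).continuousAt).continuousWithinAt)
      hx0.1.1 hx0.1.2 (fun s _ hd => hmsphere _ hd) (fun T hT hin => ?_) t ht
    refine relEntropy_le_of_iss hxh hxh1 hxS hxd hT fun s hs => ?_
    by_cases hxs : x s = xh
    · simp [hxs]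
    · exact (hISS _ (hball (hin s hs)).1.2 (hxS s hs.1).1 (hxS s hs.1).2 hxs).le
  exact hU'U ⟨(hball (mem_closedBall.2 hstay.le)).1.1, hxS t ht⟩

theorem iss_implies_lyapunov_stable {α : Type*} [Fintype α]
    (φ : (α → ℝ) → (α → ℝ)) (hφ : ContDiff ℝ 1 φ)
    (xh : α → ℝ) (hxh : xh ∈ {x : α → ℝ | (∀ a, 0 < x a) ∧ ∑ a, x a = 1})
    (hrest : ∀ a, φ xh a = xh a * ∑ b, φ xh b)
    (N : Set (α → ℝ)) (hN : N ∈ nhds xh)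
    (hISS : ∀ x ∈ N, (∀ a, 0 < x a) → ∑ a, x a = 1 → x ≠ xh →
      (∑ a, ((x a - xh a) / x a) * φ x a) < 0) :
    ∀ U ∈ nhdsWithin xh {x : α → ℝ | (∀ a, 0 < x a) ∧ ∑ a, x a = 1},
      ∃ W ∈ nhdsWithin xh {x : α → ℝ | (∀ a, 0 < x a) ∧ ∑ a, x a = 1},
        W ⊆ U ∧
        ∀ x : ℝ → α → ℝ,
          (∀ t : ℝ, 0 ≤ t → x t ∈ {x : α → ℝ | (∀ a, 0 < x a) ∧ ∑ a, x a = 1}) →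
          (∀ t : ℝ, 0 ≤ t → ∀ a, HasDerivAt (fun s => x s a)
            (φ (x t) a - x t a * ∑ b, φ (x t) b) t) →
          x 0 ∈ W → ∀ t : ℝ, 0 ≤ t → x t ∈ U :=
  iss_implies_lyapunov_stable_general φ xh hxh N hN hISS
end
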